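/- Define κ : 𝔹^{m+1} → 𝔹 (m ≥ 3) by κ(y, x_n) = 0 if x_n = 0, and κ(y, x_n) = κ₁(y) if x_n = 1, where κ₁(y) = 1 iff exactly one coordinate of y differs from a fixed point u ∈ 𝔹^m (and κ₁(y)=0 otherwise). Then for the instance v = (u, 1) with κ(v) = 0: Sv(n) = (1/(m+1)) · (2^{m+1} − m − 2)/2^{m+1}, where n = m+1. -/

import Mathlib

open Finset

/-- `X` is a weak abductive explanation (weak AXp) for classifier `κ` at point `v`:
every point agreeing with `v` on `X` gets the same prediction as `v`. -/
def weakAXp {n : ℕ} (κ : (Fin n → Bool) → Bool) (v : Fin n → Bool)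
    (X : Finset (Fin n)) : Prop :=
  ∀ x : Fin n → Bool, (∀ i ∈ X, x i = v i) → κ x = κ v

/-- `X` is an AXp: a subset-minimal weak AXp. -/
def AXp {n : ℕ} (κ : (Fin n → Bool) → Bool) (v : Fin n → Bool)
    (X : Finset (Fin n)) : Prop :=
  weakAXp κ v X ∧ ∀ X' ⊂ X, ¬ weakAXp κ v X'

/-- `Y` is a weak contrastive explanation (weak CXp) for `κ` at `v`:
some point agreeing with `v` outside `Y` gets a different prediction. -/
def weakCXp {n : ℕ} (κ : (Fin n → Bool) → Bool) (v : Fin n → Bool)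
    (Y : Finset (Fin n)) : Prop :=
  ∃ x : Fin n → Bool, (∀ i ∉ Y, x i = v i) ∧ κ x ≠ κ v

/-- `Y` is a CXp: a subset-minimal weak CXp. -/
def CXp {n : ℕ} (κ : (Fin n → Bool) → Bool) (v : Fin n → Bool)
    (Y : Finset (Fin n)) : Prop :=
  weakCXp κ v Y ∧ ∀ Y' ⊂ Y, ¬ weakCXp κ v Y'

/-- A feature is relevant if it occurs in some AXp. -/
def Relevant {n : ℕ} (κ : (Fin n → Bool) → Bool) (v : Fin n → Bool) (i : Fin n) : Prop :=
  ∃ X, AXp κ v X ∧ i ∈ X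

/-- A feature is irrelevant if it occurs in no AXp. -/
def Irrelevant {n : ℕ} (κ : (Fin n → Bool) → Bool) (v : Fin n → Bool) (i : Fin n) : Prop :=
  ¬ Relevant κ v i

/-- `phi κ v S` : average value of `κ` over points agreeing with `v` on `S`
(uniform distribution). -/
noncomputable def phi {n : ℕ} (κ : (Fin n → Bool) → Bool) (v : Fin n → Bool)
    (S : Finset (Fin n)) : ℝ :=
  (1 / 2 ^ (n - S.card)) *
    ∑ x ∈ Finset.univ.filter (fun x : Fin n → Bool => ∀ i ∈ S, x i = v i),
      (if κ x then (1 : ℝ) else 0)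

/-- Shapley value of feature `i` for classifier `κ` at point `v`. -/
noncomputable def Sv {n : ℕ} (κ : (Fin n → Bool) → Bool) (v : Fin n → Bool)
    (i : Fin n) : ℝ :=
  ∑ S ∈ (Finset.univ.erase i).powerset,
    ((S.card.factorial * (n - S.card - 1).factorial : ℝ) / n.factorial) *
      (phi κ v (insert i S) - phi κ v S)


lemma geo_sum (m : ℕ) :
    ∑ j ∈ range (m + 1), (j : ℝ) / 2 ^ (j + 1)
      = (2 ^ (m + 1) - (m : ℝ) - 2) / 2 ^ (m + 1) := by
  induction m with
  | zero => norm_num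
  | succ n ih =>
    rw [Finset.sum_range_succ, ih]
    have h1 : (2 : ℝ) ^ (n + 1) ≠ 0 := by positivity
    have h2 : (2 : ℝ) ^ (n + 1 + 1) ≠ 0 := by positivity
    field_simp
    push_cast
    ring

lemma key_card (m : ℕ) (u : Fin m → Bool) (S : Finset (Fin (m + 1)))
    (hS : Fin.last m ∉ S) :
    (Finset.univ.filter (fun x : Fin (m + 1) → Bool =>
      (∀ i ∈ S, x i = (Fin.snoc u true : Fin (m + 1) → Bool) i) ∧ x (Fin.last m) = true ∧
        (Finset.univ.filter (fun i : Fin m => x i.castSucc ≠ u i)).card = 1)).card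
      = m - S.card := by
  classical
  set f : Fin m → (Fin (m + 1) → Bool) :=
    fun j => Fin.snoc (Function.update u j (!u j)) true with hf
  have hfilter : ∀ j : Fin m,
      (Finset.univ.filter (fun i : Fin m => f j i.castSucc ≠ u i)) = {j} := by
    intro j
    ext i
    simp only [mem_filter, mem_univ, true_and, mem_singleton, hf, Fin.snoc_castSucc]
    rcases eq_or_ne i j with rfl | h
    · simp [Function.update_self]
    · simp [Function.update_of_ne h, h]
  have hb : (Finset.univ.filter (fun j : Fin m => j.castSucc ∉ S)).card
      = (Finset.univ.filter (fun x : Fin (m + 1) → Bool =>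
        (∀ i ∈ S, x i = (Fin.snoc u true : Fin (m + 1) → Bool) i) ∧ x (Fin.last m) = true ∧
          (Finset.univ.filter (fun i : Fin m => x i.castSucc ≠ u i)).card = 1)).card := by
    apply Finset.card_bij (fun j _ => f j)
    · intro j hj
      simp only [mem_filter, mem_univ, true_and] at hj ⊢
      refine ⟨?_, by simp only [hf, Fin.snoc_last], by rw [hfilter]; simp⟩
      intro i hi
      have hil : i ≠ Fin.last m := fun h => hS (h ▸ hi)
      obtain ⟨k, rfl⟩ := Fin.exists_castSucc_eq.2 hil
      have hkj : k ≠ j := fun h => hj (h ▸ hi)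
      simp only [hf, Fin.snoc_castSucc, Function.update_of_ne hkj]
    · intro j₁ _ j₂ _ h
      have := congrFun h j₁.castSucc
      simp only [hf, Fin.snoc_castSucc, Function.update_self] at this
      by_contra hne
      rw [Function.update_of_ne hne] at this
      exact (Bool.not_ne_self (u j₁)) this
    · intro x hx
      simp only [mem_filter, mem_univ, true_and] at hx
      obtain ⟨hx1, hx2, hx3⟩ := hx
      obtain ⟨j, hj⟩ := Finset.card_eq_one.1 hx3
      have hjmem : x j.castSucc ≠ u j := by
        have : j ∈ Finset.univ.filter (fun i : Fin m => x i.castSucc ≠ u i) := by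
          rw [hj]; simp
        exact (mem_filter.1 this).2
      have hjS : j.castSucc ∉ S := by
        intro hmem
        exact hjmem (by rw [hx1 _ hmem, Fin.snoc_castSucc])
      refine ⟨j, by simp [hjS], ?_⟩
      funext i
      rcases eq_or_ne i (Fin.last m) with rfl | hil
      · simp only [hf, Fin.snoc_last, hx2]
      · obtain ⟨k, rfl⟩ := Fin.exists_castSucc_eq.2 hil
        rcases eq_or_ne k j with rfl | hkj
        · simp only [hf, Fin.snoc_castSucc, Function.update_self]
          revert hjmem; cases x k.castSucc <;> cases u k <;> simp
        · have : x k.castSucc = u k := by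
            by_contra hc
            have : k ∈ Finset.univ.filter (fun i : Fin m => x i.castSucc ≠ u i) := by
              simp [hc]
            rw [hj, mem_singleton] at this
            exact hkj this
          simp only [hf, Fin.snoc_castSucc, Function.update_of_ne hkj, this]
  rw [← hb]
  have hc : (Finset.univ.filter (fun j : Fin m => j.castSucc ∈ S)).card = S.card := by
    apply Finset.card_bij (fun j hj => j.castSucc)
    · intro j hj; exact (mem_filter.1 hj).2
    · intro j₁ _ j₂ _ h; exact Fin.castSucc_injective m h
    · intro i hi
      have hil : i ≠ Fin.last m := fun h => hS (h ▸ hi)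
      obtain ⟨k, rfl⟩ := Fin.exists_castSucc_eq.2 hil
      exact ⟨k, by simp [hi], rfl⟩
  rw [Finset.filter_not, Finset.card_sdiff_of_subset (Finset.filter_subset _ _), hc]
  simp

section helpers

variable {m : ℕ} {u : Fin m → Bool} {κ : (Fin (m + 1) → Bool) → Bool}
    {v : Fin (m + 1) → Bool}

lemma kappa_iff (hκ : ∀ x, κ x =
      if x (Fin.last m) then
        decide ((Finset.univ.filter (fun i => x i.castSucc ≠ u i)).card = 1)
      else false) (x : Fin (m + 1) → Bool) : (κ x = true) ↔
    (x (Fin.last m) = true ∧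
      (Finset.univ.filter (fun i : Fin m => x i.castSucc ≠ u i)).card = 1) := by
  rw [hκ]
  cases hx : x (Fin.last m) <;> simp [hx]

lemma sum_S (hκ : ∀ x, κ x =
      if x (Fin.last m) then
        decide ((Finset.univ.filter (fun i => x i.castSucc ≠ u i)).card = 1)
      else false) (hv : v = Fin.snoc u true)
    (S : Finset (Fin (m + 1))) (hlast : Fin.last m ∉ S) :
    ∑ x ∈ Finset.univ.filter (fun x : Fin (m + 1) → Bool => ∀ i ∈ S, x i = v i),
      (if κ x then (1 : ℝ) else 0) = ((m - S.card : ℕ) : ℝ) := by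
  subst hv
  have hfil : (Finset.univ.filter (fun x : Fin (m + 1) → Bool =>
        (∀ i ∈ S, x i = (Fin.snoc u true : Fin (m + 1) → Bool) i) ∧ κ x = true))
      = Finset.univ.filter (fun x : Fin (m + 1) → Bool =>
          (∀ i ∈ S, x i = (Fin.snoc u true : Fin (m + 1) → Bool) i) ∧ x (Fin.last m) = true ∧
            (Finset.univ.filter (fun i : Fin m => x i.castSucc ≠ u i)).card = 1) := by
    refine Finset.filter_congr fun x _ => ?_
    exact and_congr Iff.rfl (kappa_iff hκ x)
  rw [Finset.sum_boole, Finset.filter_filter, hfil, key_card m u S hlast]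

lemma phi_S (hκ : ∀ x, κ x =
      if x (Fin.last m) then
        decide ((Finset.univ.filter (fun i => x i.castSucc ≠ u i)).card = 1)
      else false) (hv : v = Fin.snoc u true)
    (S : Finset (Fin (m + 1))) (hS : S ⊆ Finset.univ.erase (Fin.last m)) :
    phi κ v S = ((m - S.card : ℕ) : ℝ) / 2 ^ (m + 1 - S.card) := by
  have hlast : Fin.last m ∉ S := fun h => (Finset.mem_erase.1 (hS h)).1 rfl
  rw [phi, sum_S hκ hv S hlast]
  ring

lemma phi_insert (hκ : ∀ x, κ x =
      if x (Fin.last m) then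
        decide ((Finset.univ.filter (fun i => x i.castSucc ≠ u i)).card = 1)
      else false) (hv : v = Fin.snoc u true)
    (S : Finset (Fin (m + 1))) (hS : S ⊆ Finset.univ.erase (Fin.last m)) :
    phi κ v (insert (Fin.last m) S)
      = ((m - S.card : ℕ) : ℝ) / 2 ^ (m - S.card) := by
  have hlast : Fin.last m ∉ S := fun h => (Finset.mem_erase.1 (hS h)).1 rfl
  rw [phi]
  have hcard : (insert (Fin.last m) S).card = S.card + 1 :=
    Finset.card_insert_of_notMem hlast
  have hexp : m + 1 - (insert (Fin.last m) S).card = m - S.card := by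
    rw [hcard]; omega
  have hsum : ∑ x ∈ Finset.univ.filter
        (fun x : Fin (m + 1) → Bool => ∀ i ∈ insert (Fin.last m) S, x i = v i),
      (if κ x then (1 : ℝ) else 0) = ((m - S.card : ℕ) : ℝ) := by
    subst hv
    have hfil : (Finset.univ.filter (fun x : Fin (m + 1) → Bool =>
          (∀ i ∈ insert (Fin.last m) S, x i = (Fin.snoc u true : Fin (m + 1) → Bool) i)
            ∧ κ x = true))
        = Finset.univ.filter (fun x : Fin (m + 1) → Bool =>
            (∀ i ∈ S, x i = (Fin.snoc u true : Fin (m + 1) → Bool) i) ∧ x (Fin.last m) = true ∧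
              (Finset.univ.filter (fun i : Fin m => x i.castSucc ≠ u i)).card = 1) := by
      refine Finset.filter_congr fun x _ => ?_
      rw [and_congr Iff.rfl (kappa_iff hκ x)]
      constructor
      · rintro ⟨h1, h2, h3⟩
        exact ⟨fun i hi => h1 i (Finset.mem_insert_of_mem hi), h2, h3⟩
      · rintro ⟨h1, h2, h3⟩
        refine ⟨fun i hi => ?_, h2, h3⟩
        rcases Finset.mem_insert.1 hi with rfl | hi
        · rw [h2, Fin.snoc_last]
        · exact h1 i hi
    rw [Finset.sum_boole, Finset.filter_filter, hfil, key_card m u S hlast]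
  rw [hsum, hexp]
  ring

end helpers


/-- Hamming-ball construction: `κ(y,xₙ) = 0` if `xₙ = 0`, and for `xₙ = 1` it is
the indicator that `y` is at Hamming distance exactly 1 from `u`. Then for
`v = (u,1)`, `Sv(n) = (1/(m+1)) · (2^{m+1} − m − 2)/2^{m+1}`. -/
theorem stmt13 (m : ℕ) (hm : 3 ≤ m) (u : Fin m → Bool)
    (κ : (Fin (m + 1) → Bool) → Bool)
    (hκ : ∀ x, κ x =
      if x (Fin.last m) then
        decide ((Finset.univ.filter (fun i => x i.castSucc ≠ u i)).card = 1)
      else false)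
    (v : Fin (m + 1) → Bool) (hv : v = Fin.snoc u true) :
    Sv κ v (Fin.last m)
      = ((1 : ℝ) / (m + 1)) * ((2 ^ (m + 1) - (m : ℝ) - 2) / 2 ^ (m + 1)) := by
  classical
  have hcu : (Finset.univ.erase (Fin.last m)).card = m := by
    rw [Finset.card_erase_of_mem (Finset.mem_univ _)]
    simp
  set g : ℕ → ℝ := fun k =>
    ((k.factorial * (m - k).factorial : ℝ) / (m + 1).factorial) *
      (((m - k : ℕ) : ℝ) / 2 ^ (m - k + 1)) with hg
  have hstep : Sv κ v (Fin.last m)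
      = ∑ S ∈ (Finset.univ.erase (Fin.last m)).powerset, g S.card := by
    rw [Sv]
    apply Finset.sum_congr rfl
    intro S hS
    rw [Finset.mem_powerset] at hS
    have hk : S.card ≤ m := le_trans (Finset.card_le_card hS) (le_of_eq hcu)
    rw [phi_insert hκ hv S hS, phi_S hκ hv S hS]
    have h1 : m + 1 - S.card - 1 = m - S.card := by omega
    have h2 : m + 1 - S.card = (m - S.card) + 1 := by omega
    rw [h1, h2, hg]
    have h3 : (2 : ℝ) ^ (m - S.card) ≠ 0 := by positivity
    field_simp
    ring
  rw [hstep, Finset.sum_powerset, hcu]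
  have hinner : ∀ j ∈ Finset.range (m + 1),
      ∑ S ∈ Finset.powersetCard j (Finset.univ.erase (Fin.last m)), g S.card
        = ((1 : ℝ) / (m + 1)) * (((m - j : ℕ) : ℝ) / 2 ^ (m - j + 1)) := by
    intro j hj
    have hjm : j ≤ m := Nat.lt_succ_iff.1 (Finset.mem_range.1 hj)
    have : ∀ S ∈ Finset.powersetCard j (Finset.univ.erase (Fin.last m)),
        g S.card = g j := by
      intro S hS
      rw [(Finset.mem_powersetCard.1 hS).2]
    rw [Finset.sum_congr rfl this, Finset.sum_const, Finset.card_powersetCard, hcu,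
      nsmul_eq_mul, hg]
    have hfac : ((m.choose j : ℝ) * (j.factorial * (m - j).factorial)) = m.factorial := by
      rw_mod_cast [← Nat.choose_mul_factorial_mul_factorial hjm]
      push_cast
      ring
    have hm1 : ((m + 1).factorial : ℝ) = (m + 1) * m.factorial := by
      rw [Nat.factorial_succ]; push_cast; ring
    have hmne : ((m : ℝ) + 1) ≠ 0 := by positivity
    have hch : (m.choose j : ℝ) ≠ 0 := Nat.cast_ne_zero.2 (Nat.choose_pos hjm).ne'
    have hA : (j.factorial : ℝ) * (m - j).factorial ≠ 0 :=
      mul_ne_zero (Nat.cast_ne_zero.2 j.factorial_ne_zero)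
        (Nat.cast_ne_zero.2 (m - j).factorial_ne_zero)
    have hco : (m.choose j : ℝ) * ((j.factorial : ℝ) * (m - j).factorial / (m + 1).factorial)
        = 1 / (m + 1) := by
      have h1 : ((m + 1).factorial : ℝ)
          = ((m : ℝ) + 1) * ((m.choose j : ℝ) * ((j.factorial : ℝ) * (m - j).factorial)) := by
        rw [hm1, ← hfac]
      rw [h1]
      field_simp
    linear_combination (((m - j : ℕ) : ℝ) / 2 ^ (m - j + 1)) * hco
  rw [Finset.sum_congr rfl hinner, ← Finset.mul_sum]
  have hrefl := Finset.sum_range_reflect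
    (fun k => ((k : ℕ) : ℝ) / 2 ^ (k + 1)) (m + 1)
  have : ∑ j ∈ Finset.range (m + 1), (((m - j : ℕ) : ℝ) / 2 ^ (m - j + 1))
      = ∑ j ∈ Finset.range (m + 1), ((j : ℝ) / 2 ^ (j + 1)) := by
    rw [← hrefl]
    apply Finset.sum_congr rfl
    intro j hj
    norm_num
  rw [this, geo_sum]
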